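/- arXiv:1001.4145 — 3 statements merged into one kernel-verified Lean document; each statement's English description precedes it below -/
import Mathlib

section
/- Let C = cone(v₁, …, v_k) ⊆ ℝⁿ be a rational polyhedral cone with v₁, …, v_k ∈ ℤⁿ, such that v₁, …, v_{k-1} lie in a facet of C defined by a hyperplane cᵀx = 0 with c ∈ ℤⁿ, cᵀv_i = 0 for i < k, cᵀy ≥ 0 for all y ∈ C, and cᵀv_k = 1. Then every lattice point z ∈ C ∩ ℤⁿ can be written as z = λ·v_k + z' where λ ∈ ℕ and z' ∈ cone(v₁, …, v_{k-1}) ∩ ℤⁿ. Consequently, the monoid C ∩ ℤⁿ is generated by {v_k} together with the Hilbert basis of cone(v₁, …, v_{k-1}). -/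
def IsLatticePt {n : ℕ} (x : Fin n → ℝ) : Prop := ∀ i, ∃ m : ℤ, x i = (m : ℝ)

def coneOf {n k : ℕ} (v : Fin k → (Fin n → ℝ)) : Set (Fin n → ℝ) :=
  {x | ∃ lam : Fin k → ℝ, (∀ i, 0 ≤ lam i) ∧ x = ∑ i, lam i • v i}

def IsIrred {n : ℕ} (M : Set (Fin n → ℝ)) (h : Fin n → ℝ) : Prop :=
  h ∈ M ∧ h ≠ 0 ∧ ∀ a b : Fin n → ℝ, a ∈ M → b ∈ M → h = a + b → a = 0 ∨ b = 0

def HilbBasis {n : ℕ} (C : Set (Fin n → ℝ)) : Set (Fin n → ℝ) :=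
  {h | IsIrred {x | x ∈ C ∧ IsLatticePt x} h}

/-!
Write a lattice point `z` of `C` as `z' + a • w` with `z'` in the facet cone `C'`. The functional
`cᵀ` vanishes on `C'` and is `1` on `w`, so `a = cᵀ z`, an integer because `z` and `c` are
integral; hence `z' = z - a • w` is a lattice point of `C'`.

Lattice points of the pointed cone `C'` are sums of irreducible ones: separating `0` from the
convex hull of the nonzero generators yields a functional `f` with `‖x‖ ≤ f x` on `C'`, so every
nonzero lattice point has height `f ≥ 1`, and splitting a reducible point lowers the height of
both parts by at least `1`.
-/

open Set PointedCone

lemma coneOf_eq_hull {n k : ℕ} (g : Fin k → Fin n → ℝ) : coneOf g = hull ℝ (range g) := by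
  ext x
  rw [SetLike.mem_coe, Submodule.mem_span_range_iff_exists_fun]
  constructor
  · rintro ⟨lam, hlam, rfl⟩
    exact ⟨fun i => ⟨lam i, hlam i⟩, rfl⟩
  · rintro ⟨c, rfl⟩
    exact ⟨fun i => c i, fun i => (c i).2, rfl⟩

namespace PointedCone

variable {E : Type*}

lemma eq_zero_of_sum_eq_zero {R : Type*} [Ring R] [PartialOrder R] [IsOrderedRing R]
    [AddCommGroup E] [Module R E] {C : PointedCone R E} (hC : (C : ConvexCone R E).Salient)
    {ι : Type*} {s : Finset ι} {x : ι → E} (hx : ∀ i ∈ s, x i ∈ C) (hsum : ∑ i ∈ s, x i = 0) :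
    ∀ i ∈ s, x i = 0 := by
  classical
  intro i hi
  by_contra hne
  have hrest : ∑ j ∈ s.erase i, x j ∈ C :=
    C.sum_mem fun j hj => hx j (Finset.mem_of_mem_erase hj)
  refine hC (x i) (hx i hi) hne ?_
  rwa [← neg_eq_of_add_eq_zero_right ((Finset.add_sum_erase s x hi).trans hsum)] at hrest

variable [NormedAddCommGroup E] [NormedSpace ℝ E]

lemma exists_dual_one_le_of_salient {s : Set E} (hs : s.Finite)
    (hsal : (hull ℝ s : ConvexCone ℝ E).Salient) :
    ∃ f : StrongDual ℝ E, ∀ x ∈ s, x ≠ 0 → 1 ≤ f x := by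
  set T := (hs.sdiff (t := {0})).toFinset
  have h0 : (0 : E) ∉ convexHull ℝ (T : Set E) := by
    rw [Finset.mem_convexHull']
    rintro ⟨w, hw0, hw1, hsum⟩
    have hT : ∀ y ∈ T, y ∈ s ∧ y ≠ 0 := by simp [T]
    have hterm := eq_zero_of_sum_eq_zero hsal
      (fun y hy => (hull ℝ s).smul_mem (hw0 y hy) (subset_hull (hT y hy).1)) hsum
    have hw : ∀ y ∈ T, w y = 0 := fun y hy =>
      (smul_eq_zero.1 (hterm y hy)).resolve_right (hT y hy).2
    simp [Finset.sum_eq_zero hw] at hw1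
  obtain ⟨f, u, hu0, hu⟩ := geometric_hahn_banach_point_closed (convex_convexHull ℝ _)
    (T.finite_toSet.isClosed_convexHull ℝ) h0
  rw [map_zero] at hu0
  refine ⟨u⁻¹ • f, fun x hx hx0 => ?_⟩
  have hux := hu x (subset_convexHull ℝ _ (by simp [T, hx, hx0]))
  rw [smul_apply, smul_eq_mul, le_inv_mul_iff₀ hu0]
  linarith

lemma exists_dual_norm_le_of_fg {C : PointedCone ℝ E} (hfg : C.FG)
    (hsal : (C : ConvexCone ℝ E).Salient) : ∃ f : StrongDual ℝ E, ∀ x ∈ C, ‖x‖ ≤ f x := by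
  obtain ⟨s, hs, rfl⟩ := Submodule.fg_def.1 hfg
  obtain ⟨f, hf⟩ := exists_dual_one_le_of_salient hs hsal
  obtain ⟨K, hK⟩ := (hs.image (‖·‖)).bddAbove
  refine ⟨K • f, fun x hx => ?_⟩
  induction hx using Submodule.span_induction with
  | mem x hx =>
    by_cases hx0 : x = 0
    · simp [hx0]
    have hxK : ‖x‖ ≤ K := hK (mem_image_of_mem _ hx)
    calc ‖x‖ ≤ K := hxK
      _ ≤ K * f x := le_mul_of_one_le_right ((norm_nonneg x).trans hxK) (hf x hx hx0)
  | zero => simp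
  | add x y _ _ hx hy =>
    rw [map_add]
    exact (norm_add_le x y).trans (add_le_add hx hy)
  | smul a x _ hx =>
    rw [← Nonneg.coe_smul, map_smul, norm_smul, Real.norm_of_nonneg a.2, smul_eq_mul]
    exact mul_le_mul_of_nonneg_left hx a.2

end PointedCone

def latticePoints (n : ℕ) : AddSubgroup (Fin n → ℝ) := ((Int.castAddHom ℝ).compLeft (Fin n)).range

lemma mem_latticePoints {n : ℕ} {x : Fin n → ℝ} : x ∈ latticePoints n ↔ IsLatticePt x := by
  constructor
  · rintro ⟨y, rfl⟩ t
    exact ⟨y t, rfl⟩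
  · intro hx
    choose y hy using hx
    exact ⟨y, funext fun t => (hy t).symm⟩

lemma IsLatticePt.one_le_norm {n : ℕ} {x : Fin n → ℝ} (hx : IsLatticePt x) (hne : x ≠ 0) :
    1 ≤ ‖x‖ := by
  obtain ⟨t, ht⟩ := Function.ne_iff.1 hne
  obtain ⟨m, hm⟩ := hx t
  have hm0 : m ≠ 0 := by
    rintro rfl
    simp [hm] at ht
  calc (1 : ℝ) ≤ |(m : ℝ)| := by exact_mod_cast Int.one_le_abs hm0
    _ = ‖x t‖ := by rw [hm, Real.norm_eq_abs]
    _ ≤ ‖x‖ := norm_le_pi_norm x t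

lemma IsLatticePt.exists_intCast_dotProduct_eq {n : ℕ} {x : Fin n → ℝ} (hx : IsLatticePt x)
    (c : Fin n → ℤ) : ∃ m : ℤ, (Int.cast ∘ c) ⬝ᵥ x = m := by
  obtain ⟨y, rfl⟩ := mem_latticePoints.2 hx
  exact ⟨c ⬝ᵥ y, ((Int.castRingHom ℝ).map_dotProduct c y).symm⟩

lemma mem_closure_setOf_isIrred {n : ℕ} {M : Set (Fin n → ℝ)} (f : (Fin n → ℝ) →+ ℝ)
    (hf : ∀ x ∈ M, x ≠ 0 → 1 ≤ f x) {z : Fin n → ℝ} (hz : z ∈ M) :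
    z ∈ AddSubmonoid.closure {h | IsIrred M h} := by
  suffices key : ∀ N : ℕ, ∀ z ∈ M, f z ≤ N → z ∈ AddSubmonoid.closure {h | IsIrred M h} from
    key _ z hz (Nat.le_ceil _)
  intro N
  induction N with
  | zero =>
    intro z hz hfz
    obtain rfl : z = 0 := by
      by_contra hz0
      linarith [hf z hz hz0, (by exact_mod_cast hfz : f z ≤ 0)]
    exact zero_mem _
  | succ N ih =>
    intro z hz hfz
    by_cases hz0 : z = 0
    · exact hz0 ▸ zero_mem _
    by_cases hirr : IsIrred M z
    · exact AddSubmonoid.subset_closure hirr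
    obtain ⟨a, b, ha, hb, rfl, ha0, hb0⟩ :
        ∃ a b, a ∈ M ∧ b ∈ M ∧ z = a + b ∧ a ≠ 0 ∧ b ≠ 0 := by
      simpa [IsIrred, hz, hz0] using hirr
    have hfa := hf a ha ha0
    have hfb := hf b hb hb0
    rw [map_add, Nat.cast_succ] at hfz
    exact add_mem (ih a ha (by linarith)) (ih b hb (by linarith))

theorem mem_closure_hilbBasis {n : ℕ} {C : PointedCone ℝ (Fin n → ℝ)} (hfg : C.FG)
    (hsal : (C : ConvexCone ℝ (Fin n → ℝ)).Salient) {z : Fin n → ℝ} (hz : z ∈ C)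
    (hzl : IsLatticePt z) : z ∈ AddSubmonoid.closure (HilbBasis (C : Set (Fin n → ℝ))) := by
  obtain ⟨f, hf⟩ := exists_dual_norm_le_of_fg hfg hsal
  exact mem_closure_setOf_isIrred f.toLinearMap.toAddMonoidHom
    (fun x hx hx0 => (hx.2.one_le_norm hx0).trans (hf x hx.1)) ⟨hz, hzl⟩

lemma dotProduct_eq_zero_of_mem_hull {n : ℕ} {S : Set (Fin n → ℝ)} {v x : Fin n → ℝ}
    (hS : ∀ y ∈ S, v ⬝ᵥ y = 0) (hx : x ∈ hull ℝ S) : v ⬝ᵥ x = 0 := by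
  induction hx using Submodule.span_induction with
  | mem y hy => exact hS y hy
  | zero => exact dotProduct_zero v
  | add x y _ _ hx hy => rw [dotProduct_add, hx, hy, add_zero]
  | smul a x _ hx => rw [dotProduct_smul, hx, smul_zero]

lemma exists_natCast_smul_add_of_mem_hull_insert {n : ℕ} {S : Set (Fin n → ℝ)}
    {w : Fin n → ℝ} (c : Fin n → ℤ) (hS : ∀ x ∈ S, (Int.cast ∘ c) ⬝ᵥ x = 0)
    (hw : (Int.cast ∘ c) ⬝ᵥ w = 1) (hwl : IsLatticePt w) {z : Fin n → ℝ}
    (hz : z ∈ hull ℝ (insert w S)) (hzl : IsLatticePt z) :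
    ∃ (lam : ℕ) (z' : Fin n → ℝ), z' ∈ hull ℝ S ∧ IsLatticePt z' ∧ z = (lam : ℝ) • w + z' := by
  rw [hull, Submodule.span_insert] at hz
  obtain ⟨y, hy, z', hz', rfl⟩ := Submodule.mem_sup.1 hz
  obtain ⟨a, rfl⟩ := Submodule.mem_span_singleton.1 hy
  rw [← Nonneg.coe_smul] at hzl ⊢
  obtain ⟨m, hm⟩ := hzl.exists_intCast_dotProduct_eq c
  have ha : (a : ℝ) = m := by
    rw [← hm, dotProduct_add, dotProduct_smul, hw, dotProduct_eq_zero_of_mem_hull hS hz',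
      smul_eq_mul, mul_one, add_zero]
  lift m to ℕ using (by exact_mod_cast ha ▸ a.2)
  rw [Int.cast_natCast] at ha
  rw [ha] at hzl ⊢
  have hz'l := sub_mem (mem_latticePoints.2 hzl) (nsmul_mem (mem_latticePoints.2 hwl) m)
  rw [← Nat.cast_smul_eq_nsmul ℝ, add_sub_cancel_left] at hz'l
  exact ⟨m, z', hz', mem_latticePoints.1 hz'l, rfl⟩

theorem setOf_mem_isLatticePt_eq_closure {n : ℕ} {C C' : PointedCone ℝ (Fin n → ℝ)}
    {w : Fin n → ℝ} (hC' : C' ≤ C) (hfg : C'.FG)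
    (hsal : (C' : ConvexCone ℝ (Fin n → ℝ)).Salient) (hw : w ∈ C) (hwl : IsLatticePt w)
    (hsplit : ∀ z ∈ C, IsLatticePt z → ∃ (lam : ℕ) (z' : Fin n → ℝ),
      z' ∈ C' ∧ IsLatticePt z' ∧ z = (lam : ℝ) • w + z') :
    {z | z ∈ C ∧ IsLatticePt z} =
      (AddSubmonoid.closure ({w} ∪ HilbBasis (C' : Set (Fin n → ℝ))) : Set (Fin n → ℝ)) := by
  refine Subset.antisymm ?_ ?_
  · rintro z ⟨hz, hzl⟩
    obtain ⟨lam, z', hz', hz'l, rfl⟩ := hsplit z hz hzl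
    have hw' : w ∈ AddSubmonoid.closure ({w} ∪ HilbBasis (C' : Set (Fin n → ℝ))) :=
      AddSubmonoid.subset_closure (Or.inl rfl)
    have hz'' : z' ∈ AddSubmonoid.closure ({w} ∪ HilbBasis (C' : Set (Fin n → ℝ))) :=
      AddSubmonoid.closure_mono subset_union_right (mem_closure_hilbBasis hfg hsal hz' hz'l)
    rw [Nat.cast_smul_eq_nsmul]
    exact AddSubmonoid.add_mem _ (AddSubmonoid.nsmul_mem _ hw' lam) hz''
  · have hle : AddSubmonoid.closure ({w} ∪ HilbBasis (C' : Set (Fin n → ℝ))) ≤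
        C.toAddSubmonoid ⊓ (latticePoints n).toAddSubmonoid := by
      rw [AddSubmonoid.closure_le]
      rintro x (rfl | ⟨⟨hx, hxl⟩, -⟩)
      · exact ⟨hw, mem_latticePoints.2 hwl⟩
      · exact ⟨hC' hx, mem_latticePoints.2 hxl⟩
    exact fun z hz => ⟨(hle hz).1, mem_latticePoints.1 (hle hz).2⟩

theorem stmt1_general {n m : ℕ} (v : Fin m → (Fin n → ℤ)) (w : Fin n → ℤ) (c : Fin n → ℤ)
    (C C' : Set (Fin n → ℝ))
    (hC : C = coneOf (Fin.snoc (fun i t => ((v i t : ℤ) : ℝ)) (fun t => ((w t : ℤ) : ℝ))))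
    (hC' : C' = coneOf (fun i t => ((v i t : ℤ) : ℝ)))
    (hfacet0 : ∀ i : Fin m, ∑ t, c t * v i t = 0)
    (hcw : ∑ t, c t * w t = 1)
    (hpointed : ∀ x ∈ C, -x ∈ C → x = 0) :
    (∀ z ∈ C, IsLatticePt z →
        ∃ (lam : ℕ) (z' : Fin n → ℝ), z' ∈ C' ∧ IsLatticePt z' ∧
          z = (lam : ℝ) • (fun t => ((w t : ℤ) : ℝ)) + z') ∧
    {z | z ∈ C ∧ IsLatticePt z} =
      (AddSubmonoid.closure ({fun t => ((w t : ℤ) : ℝ)} ∪ HilbBasis C') : Set (Fin n → ℝ)) := by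
  set U : Fin m → Fin n → ℝ := fun i t => (v i t : ℝ)
  set W : Fin n → ℝ := fun t => (w t : ℝ)
  rw [coneOf_eq_hull, Fin.range_snoc] at hC
  rw [coneOf_eq_hull] at hC'
  subst hC hC'
  have hWl : IsLatticePt W := fun t => ⟨w t, rfl⟩
  have hsplit (z) (hz : z ∈ hull ℝ (insert W (range U))) (hzl : IsLatticePt z) :=
    exists_natCast_smul_add_of_mem_hull_insert c
      (by rintro _ ⟨i, rfl⟩; simpa [dotProduct] using congrArg (Int.cast : ℤ → ℝ) (hfacet0 i))
      (by simpa [dotProduct] using congrArg (Int.cast : ℤ → ℝ) hcw) hWl hz hzl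
  have hsub : hull ℝ (range U) ≤ hull ℝ (insert W (range U)) :=
    Submodule.span_mono (subset_insert _ _)
  have hsal : (hull ℝ (range U) : ConvexCone ℝ (Fin n → ℝ)).Salient :=
    fun x hx hx0 hnx => hx0 (hpointed x (hsub hx) (hsub hnx))
  exact ⟨hsplit, setOf_mem_isLatticePt_eq_closure hsub (Submodule.fg_span (finite_range U)) hsal
    (subset_hull (mem_insert W _)) hWl hsplit⟩

/-- Lemma "Removing generators": `v 0, …, v (m-1)` are the generators lying in the facet
`cᵀx = 0` of `C`, and `w` (= `v_k`) satisfies `cᵀ w = 1`. -/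
theorem stmt1 {n m : ℕ} (v : Fin m → (Fin n → ℤ)) (w : Fin n → ℤ) (c : Fin n → ℤ)
    (C C' : Set (Fin n → ℝ))
    (hC : C = coneOf (Fin.snoc (fun i t => ((v i t : ℤ) : ℝ)) (fun t => ((w t : ℤ) : ℝ))))
    (hC' : C' = coneOf (fun i t => ((v i t : ℤ) : ℝ)))
    (hfacet0 : ∀ i : Fin m, ∑ t, c t * v i t = 0)
    (hcnonneg : ∀ y ∈ C, 0 ≤ ∑ t, (c t : ℝ) * y t)
    (hcw : ∑ t, c t * w t = 1)
    (hpointed : ∀ x ∈ C, -x ∈ C → x = 0) :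
    (∀ z ∈ C, IsLatticePt z →
        ∃ (lam : ℕ) (z' : Fin n → ℝ), z' ∈ C' ∧ IsLatticePt z' ∧
          z = (lam : ℝ) • (fun t => ((w t : ℤ) : ℝ)) + z') ∧
    {z | z ∈ C ∧ IsLatticePt z} =
      (AddSubmonoid.closure ({fun t => ((w t : ℤ) : ℝ)} ∪ HilbBasis C') : Set (Fin n → ℝ)) :=
  stmt1_general v w c C C' hC hC' hfacet0 hcw hpointed
end

section
/- In the setting of Lemma 'Removing generators': if C = cone(v₁, …, v_k) with integer generators, v₁, …, v_{k-1} lie in the hyperplane cᵀx = 0 with c ∈ ℤⁿ, cᵀy ≥ 0 on C, and cᵀv_k = 1, then the Hilbert basis of C is contained in {v_k} ∪ H(cone(v₁, …, v_{k-1})), and v_k is an irreducible element of C ∩ ℤⁿ. -/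
lemma IsIrred.mono {n : ℕ} {M M' : Set (Fin n → ℝ)} {h : Fin n → ℝ} (hirr : IsIrred M h)
    (hM : M' ⊆ M) (hh : h ∈ M') : IsIrred M' h :=
  ⟨hh, hirr.2.1, fun a b ha hb hab => hirr.2.2 a b (hM ha) (hM hb) hab⟩

lemma isLatticePt_intCast {n : ℕ} (z : Fin n → ℤ) : IsLatticePt (fun t => (z t : ℝ)) :=
  fun t => ⟨z t, rfl⟩

lemma IsLatticePt.sub {n : ℕ} {x y : Fin n → ℝ} (hx : IsLatticePt x) (hy : IsLatticePt y) :
    IsLatticePt (x - y) := fun t => by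
  obtain ⟨a, ha⟩ := hx t
  obtain ⟨b, hb⟩ := hy t
  exact ⟨a - b, by simp [ha, hb]⟩

lemma IsLatticePt.exists_intCast_dotProduct {n : ℕ} {x : Fin n → ℝ} (hx : IsLatticePt x)
    (c : Fin n → ℤ) : ∃ z : ℤ, (fun t => (c t : ℝ)) ⬝ᵥ x = z := by
  choose f hf using hx
  exact ⟨c ⬝ᵥ f, by simp [dotProduct, hf]⟩

lemma eq_zero_or_one_le_of_intCast {r : ℝ} (hr : ∃ z : ℤ, r = z) (h0 : 0 ≤ r) :
    r = 0 ∨ 1 ≤ r := by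
  obtain ⟨z, rfl⟩ := hr
  rcases (Int.cast_nonneg_iff.mp h0).eq_or_lt with hz | hz
  · exact Or.inl (by simp [← hz])
  · exact Or.inr (by exact_mod_cast hz)

lemma mem_coneOf_snoc_iff {n m : ℕ} {V : Fin m → Fin n → ℝ} {W x : Fin n → ℝ} :
    x ∈ coneOf (Fin.snoc V W) ↔
      ∃ lam : Fin m → ℝ, ∃ μ : ℝ, (∀ i, 0 ≤ lam i) ∧ 0 ≤ μ ∧ x = ∑ i, lam i • V i + μ • W := by
  constructor
  · rintro ⟨lam, hlam, rfl⟩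
    refine ⟨fun i => lam i.castSucc, lam (Fin.last m), fun i => hlam _, hlam _, ?_⟩
    simp [Fin.sum_univ_castSucc]
  · rintro ⟨lam, μ, hlam, hμ, rfl⟩
    refine ⟨Fin.snoc lam μ, fun i => ?_, by simp [Fin.sum_univ_castSucc]⟩
    induction i using Fin.lastCases with
    | last => simpa using hμ
    | cast i => simpa using hlam i

lemma coneOf_subset_coneOf_snoc {n m : ℕ} (V : Fin m → Fin n → ℝ) (W : Fin n → ℝ) :
    coneOf V ⊆ coneOf (Fin.snoc V W) := by
  rintro x ⟨lam, hlam, rfl⟩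
  exact mem_coneOf_snoc_iff.mpr ⟨lam, 0, hlam, le_rfl, by simp⟩

lemma mem_coneOf_snoc_last {n m : ℕ} (V : Fin m → Fin n → ℝ) (W : Fin n → ℝ) :
    W ∈ coneOf (Fin.snoc V W) :=
  mem_coneOf_snoc_iff.mpr ⟨0, 1, fun _ => le_rfl, zero_le_one, by simp⟩

section Facet

variable {n m : ℕ} {V : Fin m → Fin n → ℝ} {W : Fin n → ℝ} {ℓ : (Fin n → ℝ) →ₗ[ℝ] ℝ}

lemma apply_sum_smul_add_smul (hV : ∀ i, ℓ (V i) = 0) (hW : ℓ W = 1) (lam : Fin m → ℝ)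
    (μ : ℝ) : ℓ (∑ i, lam i • V i + μ • W) = μ := by
  simp [hV, hW]

lemma apply_nonneg_of_mem_coneOf_snoc (hV : ∀ i, ℓ (V i) = 0) (hW : ℓ W = 1)
    {x : Fin n → ℝ} (hx : x ∈ coneOf (Fin.snoc V W)) : 0 ≤ ℓ x := by
  obtain ⟨lam, μ, -, hμ, rfl⟩ := mem_coneOf_snoc_iff.mp hx
  rwa [apply_sum_smul_add_smul hV hW]

lemma mem_coneOf_of_apply_eq_zero (hV : ∀ i, ℓ (V i) = 0) (hW : ℓ W = 1)
    {x : Fin n → ℝ} (hx : x ∈ coneOf (Fin.snoc V W)) (h0 : ℓ x = 0) : x ∈ coneOf V := by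
  obtain ⟨lam, μ, hlam, -, rfl⟩ := mem_coneOf_snoc_iff.mp hx
  rw [apply_sum_smul_add_smul hV hW] at h0
  exact ⟨lam, hlam, by simp [h0]⟩

lemma sub_mem_coneOf_snoc_of_one_le (hV : ∀ i, ℓ (V i) = 0) (hW : ℓ W = 1)
    {x : Fin n → ℝ} (hx : x ∈ coneOf (Fin.snoc V W)) (h1 : 1 ≤ ℓ x) :
    x - W ∈ coneOf (Fin.snoc V W) := by
  obtain ⟨lam, μ, hlam, -, rfl⟩ := mem_coneOf_snoc_iff.mp hx
  rw [apply_sum_smul_add_smul hV hW] at h1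
  refine mem_coneOf_snoc_iff.mpr ⟨lam, μ - 1, hlam, by linarith, ?_⟩
  rw [sub_smul, one_smul, add_sub_assoc]

lemma eq_zero_of_add_eq_of_apply_eq_zero (hV : ∀ i, ℓ (V i) = 0) (hW : ℓ W = 1)
    (hpointed : ∀ x ∈ coneOf (Fin.snoc V W), -x ∈ coneOf (Fin.snoc V W) → x = 0)
    {a b : Fin n → ℝ} (ha : a ∈ coneOf (Fin.snoc V W)) (hb : b ∈ coneOf (Fin.snoc V W))
    (hab : a + b = W) (ha0 : ℓ a = 0) : a = 0 := by
  have hb1 : ℓ b = 1 := by rw [← hW, ← hab, map_add, ha0, zero_add]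
  have hneg : b - W = -a := by rw [← hab]; abel
  exact hpointed a ha (hneg ▸ sub_mem_coneOf_snoc_of_one_le hV hW hb hb1.ge)

lemma isIrred_last_of_pointed (hV : ∀ i, ℓ (V i) = 0) (hW : ℓ W = 1)
    (hint : ∀ x, IsLatticePt x → ∃ z : ℤ, ℓ x = z) (hWL : IsLatticePt W)
    (hpointed : ∀ x ∈ coneOf (Fin.snoc V W), -x ∈ coneOf (Fin.snoc V W) → x = 0) :
    IsIrred {x | x ∈ coneOf (Fin.snoc V W) ∧ IsLatticePt x} W := by
  refine ⟨⟨mem_coneOf_snoc_last V W, hWL⟩, fun h0 => by simp [h0] at hW, ?_⟩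
  rintro a b ⟨ha, haL⟩ ⟨hb, hbL⟩ hab
  have hsum : ℓ a + ℓ b = 1 := by rw [← map_add, ← hab, hW]
  rcases eq_zero_or_one_le_of_intCast (hint a haL) (apply_nonneg_of_mem_coneOf_snoc hV hW ha)
    with ha0 | ha1
  · exact Or.inl (eq_zero_of_add_eq_of_apply_eq_zero hV hW hpointed ha hb hab.symm ha0)
  · have hb0 : ℓ b = 0 := by linarith [apply_nonneg_of_mem_coneOf_snoc hV hW hb]
    exact Or.inr (eq_zero_of_add_eq_of_apply_eq_zero hV hW hpointed hb ha
      (by rw [add_comm, hab]) hb0)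

lemma hilbBasis_coneOf_snoc_subset (hV : ∀ i, ℓ (V i) = 0) (hW : ℓ W = 1)
    (hint : ∀ x, IsLatticePt x → ∃ z : ℤ, ℓ x = z) (hWL : IsLatticePt W) :
    HilbBasis (coneOf (Fin.snoc V W)) ⊆ {W} ∪ HilbBasis (coneOf V) := by
  intro h hh
  obtain ⟨hC, hL⟩ := hh.1
  rcases eq_zero_or_one_le_of_intCast (hint h hL) (apply_nonneg_of_mem_coneOf_snoc hV hW hC)
    with h0 | h1
  · exact Or.inr (IsIrred.mono hh (fun x hx => ⟨coneOf_subset_coneOf_snoc V W hx.1, hx.2⟩)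
      ⟨mem_coneOf_of_apply_eq_zero hV hW hC h0, hL⟩)
  · have hW0 : W ≠ 0 := fun h0 => by simp [h0] at hW
    rcases hh.2.2 (h - W) W ⟨sub_mem_coneOf_snoc_of_one_le hV hW hC h1, hL.sub hWL⟩
      ⟨mem_coneOf_snoc_last V W, hWL⟩ (sub_add_cancel h W).symm with h0 | h0
    · exact Or.inl (sub_eq_zero.mp h0)
    · exact absurd h0 hW0

end Facet

theorem stmt12_general {n m : ℕ} (v : Fin m → (Fin n → ℤ)) (w : Fin n → ℤ) (c : Fin n → ℤ)
    (C C' : Set (Fin n → ℝ))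
    (hC : C = coneOf (Fin.snoc (fun i t => ((v i t : ℤ) : ℝ)) (fun t => ((w t : ℤ) : ℝ))))
    (hC' : C' = coneOf (fun i t => ((v i t : ℤ) : ℝ)))
    (hfacet0 : ∀ i : Fin m, ∑ t, c t * v i t = 0)
    (hcw : ∑ t, c t * w t = 1)
    (hpointed : ∀ x ∈ C, -x ∈ C → x = 0) :
    HilbBasis C ⊆ {fun t => ((w t : ℤ) : ℝ)} ∪ HilbBasis C' ∧
    IsIrred {x | x ∈ C ∧ IsLatticePt x} (fun t => ((w t : ℤ) : ℝ)) := by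
  subst hC hC'
  set ℓ := dotProductEquiv ℝ (Fin n) (fun t => (c t : ℝ))
  have hV : ∀ i, ℓ (fun t => (v i t : ℝ)) = 0 := fun i => by
    simpa [ℓ, dotProduct] using congrArg (Int.cast : ℤ → ℝ) (hfacet0 i)
  have hW : ℓ (fun t => (w t : ℝ)) = 1 := by
    simpa [ℓ, dotProduct] using congrArg (Int.cast : ℤ → ℝ) hcw
  have hint : ∀ x, IsLatticePt x → ∃ z : ℤ, ℓ x = z := fun x hx => by
    simpa [ℓ] using hx.exists_intCast_dotProduct c
  exact ⟨hilbBasis_coneOf_snoc_subset hV hW hint (isLatticePt_intCast w),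
    isIrred_last_of_pointed hV hW hint (isLatticePt_intCast w) hpointed⟩

/-- In the setting of the "Removing generators" lemma: the Hilbert basis of `C`
is contained in `{v_k} ∪ H(C')`, and `v_k` is irreducible in `C ∩ ℤⁿ`. -/
theorem stmt12 {n m : ℕ} (v : Fin m → (Fin n → ℤ)) (w : Fin n → ℤ) (c : Fin n → ℤ)
    (C C' : Set (Fin n → ℝ))
    (hC : C = coneOf (Fin.snoc (fun i t => ((v i t : ℤ) : ℝ)) (fun t => ((w t : ℤ) : ℝ))))
    (hC' : C' = coneOf (fun i t => ((v i t : ℤ) : ℝ)))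
    (hfacet0 : ∀ i : Fin m, ∑ t, c t * v i t = 0)
    (hcnonneg : ∀ y ∈ C, 0 ≤ ∑ t, (c t : ℝ) * y t)
    (hcw : ∑ t, c t * w t = 1)
    (hpointed : ∀ x ∈ C, -x ∈ C → x = 0) :
    HilbBasis C ⊆ {fun t => ((w t : ℤ) : ℝ)} ∪ HilbBasis C' ∧
    IsIrred {x | x ∈ C ∧ IsLatticePt x} (fun t => ((w t : ℤ) : ℝ)) :=
  stmt12_general v w c C C' hC hC' hfacet0 hcw hpointed
end

section
/- Let G ⊆ ℤⁿ be finite with monoid(G) normal, and let F be a face of cone(G). Then the monoid monoid(G ∩ F) of lattice points expressible from generators lying on F equals cone(G ∩ F) ∩ lattice(G ∩ F) provided every element of G lying in F generates F ∩ lattice(G); in particular, faces of the cone of a normal monoid whose lattice points are C ∩ ℤⁿ again yield normal monoids: if C ∩ ℤⁿ is generated by H and F is a face of C, then F ∩ ℤⁿ is generated by H ∩ F. -/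
/-!
The face `F` is cut out of `C` by the linear functional `ℓ x = cᵀx`, which is `≤ 0` on all of
`C`. If a sum of generators from `H` lies on `F`, the `ℓ`-values of the summands are `≤ 0` and add
up to `0`, so every summand lies on `F`: a representation of `z ∈ F ∩ ℤⁿ` over `H` only uses
generators from `H ∩ F`.
-/

theorem add_eq_zero_iff_of_nonpos {N : Type*} [AddZeroClass N] [PartialOrder N] [AddLeftMono N]
    [AddRightMono N] {a b : N} (ha : a ≤ 0) (hb : b ≤ 0) : a + b = 0 ↔ a = 0 ∧ b = 0 :=
  add_eq_zero_iff_of_nonneg (α := Nᵒᵈ) ha hb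

namespace AddSubmonoid

variable {M N : Type*} [AddZeroClass M] [AddZeroClass N] [PartialOrder N] [AddLeftMono N]
  [AddRightMono N]

theorem map_nonpos_and_mem_closure_inter_of_map_eq_zero (f : M →+ N) {S : Set M}
    (hS : ∀ x ∈ S, f x ≤ 0) {x : M} (hx : x ∈ closure S) :
    f x ≤ 0 ∧ (f x = 0 → x ∈ closure (S ∩ f ⁻¹' {0})) := by
  induction hx using closure_induction with
  | mem y hy => exact ⟨hS y hy, fun hy0 => subset_closure ⟨hy, hy0⟩⟩
  | zero => exact ⟨(map_zero f).le, fun _ => zero_mem _⟩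
  | add a b _ _ iha ihb =>
    rw [map_add]
    refine ⟨add_nonpos iha.1 ihb.1, fun hab => ?_⟩
    obtain ⟨ha0, hb0⟩ := (add_eq_zero_iff_of_nonpos iha.1 ihb.1).1 hab
    exact add_mem (iha.2 ha0) (ihb.2 hb0)

theorem mem_closure_inter_of_map_eq_zero (f : M →+ N) {S : Set M} (hS : ∀ x ∈ S, f x ≤ 0)
    {x : M} (hx : x ∈ closure S) (hfx : f x = 0) : x ∈ closure (S ∩ f ⁻¹' {0}) :=
  (map_nonpos_and_mem_closure_inter_of_map_eq_zero f hS hx).2 hfx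

end AddSubmonoid

theorem stmt13_general {n : ℕ} (C : Set (Fin n → ℝ))
    (c : Fin n → ℝ) (hsupp : ∀ y ∈ C, ∑ t, c t * y t ≤ 0)
    (F : Set (Fin n → ℝ)) (hF : F = {x | x ∈ C ∧ ∑ t, c t * x t = 0})
    (H : Set (Fin n → ℝ))
    (hHsub : H ⊆ {x | x ∈ C ∧ IsLatticePt x})
    (hHgen : ∀ z, z ∈ C → IsLatticePt z → z ∈ AddSubmonoid.closure H) :
    ∀ z, z ∈ F → IsLatticePt z → z ∈ AddSubmonoid.closure (H ∩ F) := by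
  intro z hzF hzlat
  rw [hF] at hzF ⊢
  let ℓ : (Fin n → ℝ) →+ ℝ := AddMonoidHom.mk' (c ⬝ᵥ ·) (dotProduct_add c)
  have hH_nonpos : ∀ x ∈ H, ℓ x ≤ 0 := fun x hx => hsupp x (hHsub hx).1
  have hH_ker : H ∩ ℓ ⁻¹' {0} ⊆ H ∩ {x | x ∈ C ∧ ∑ t, c t * x t = 0} :=
    fun x ⟨hxH, hx0⟩ => ⟨hxH, (hHsub hxH).1, hx0⟩
  exact AddSubmonoid.closure_mono hH_ker <|
    AddSubmonoid.mem_closure_inter_of_map_eq_zero ℓ hH_nonpos (hHgen z hzF.1 hzlat) hzF.2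

/-- Faces of a normal cone are normal: if the monoid of lattice points `C ∩ ℤⁿ`
of the rational cone `C` is generated by `H`, and `F` is the face of `C` cut out
by a supporting hyperplane `cᵀx = 0` (with `cᵀy ≤ 0` on `C`), then the monoid
`F ∩ ℤⁿ` is generated by `H ∩ F`. -/
theorem stmt13 {n k : ℕ} (v : Fin k → (Fin n → ℤ)) (C : Set (Fin n → ℝ))
    (hC : C = coneOf (fun i t => ((v i t : ℤ) : ℝ)))
    (c : Fin n → ℝ) (hsupp : ∀ y ∈ C, ∑ t, c t * y t ≤ 0)
    (F : Set (Fin n → ℝ)) (hF : F = {x | x ∈ C ∧ ∑ t, c t * x t = 0})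
    (H : Set (Fin n → ℝ))
    (hHsub : H ⊆ {x | x ∈ C ∧ IsLatticePt x})
    (hHgen : ∀ z, z ∈ C → IsLatticePt z → z ∈ AddSubmonoid.closure H) :
    ∀ z, z ∈ F → IsLatticePt z → z ∈ AddSubmonoid.closure (H ∩ F) :=
  stmt13_general C c hsupp F hF H hHsub hHgen
end
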